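/- Let A be the adjacency matrix of a graph G on p vertices with maximum vertex degree d. Then the Choi matrix of γ_{pd} = pd·δ + S_A, namely d·(I ⊗ I) + Σ_{(i,j)∈E} E_{ij} ⊗ E_{ij}, is separable; hence γ_{pd} is entanglement breaking and t_{eb} ≤ pd. -/

import Mathlib

open Matrix Kronecker BigOperators
open scoped ComplexOrder

noncomputable section

/-- The Choi matrix of a linear map `φ : M_p → M_q`. -/
def choi {p q : ℕ} (φ : Matrix (Fin p) (Fin p) ℂ →ₗ[ℂ] Matrix (Fin q) (Fin q) ℂ) :
    Matrix (Fin p × Fin q) (Fin p × Fin q) ℂ :=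
  fun ik jl => φ (Matrix.single ik.1 jl.1 1) ik.2 jl.2

/-- A map is completely positive iff its Choi matrix is positive semidefinite. -/
def IsCP {p q : ℕ} (φ : Matrix (Fin p) (Fin p) ℂ →ₗ[ℂ] Matrix (Fin q) (Fin q) ℂ) : Prop :=
  (choi φ).PosSemidef

/-- The transpose map on `M_n`. -/
def transposeMap (n : ℕ) : Matrix (Fin n) (Fin n) ℂ →ₗ[ℂ] Matrix (Fin n) (Fin n) ℂ where
  toFun X := Xᵀ
  map_add' X Y := Matrix.transpose_add X Y
  map_smul' c X := Matrix.transpose_smul c X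

/-- A CP map is PPT if its composition with the transpose is CP. -/
def IsPPT {p q : ℕ} (φ : Matrix (Fin p) (Fin p) ℂ →ₗ[ℂ] Matrix (Fin q) (Fin q) ℂ) : Prop :=
  IsCP φ ∧ IsCP ((transposeMap q).comp φ)

/-- Separability of a matrix on a tensor (Kronecker) product. -/
def Separable {p q : ℕ} (M : Matrix (Fin p × Fin q) (Fin p × Fin q) ℂ) : Prop :=
  ∃ (m : ℕ) (P : Fin m → Matrix (Fin p) (Fin p) ℂ) (Q : Fin m → Matrix (Fin q) (Fin q) ℂ),
    (∀ k, (P k).PosSemidef) ∧ (∀ k, (Q k).PosSemidef) ∧ M = ∑ k, P k ⊗ₖ Q k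

/-- A map is entanglement breaking iff its Choi matrix is separable. -/
def IsEB {p q : ℕ} (φ : Matrix (Fin p) (Fin p) ℂ →ₗ[ℂ] Matrix (Fin q) (Fin q) ℂ) : Prop :=
  Separable (choi φ)

/-- Schur (Hadamard) multiplication by `P` as a linear map. -/
def schurMap {n : ℕ} (P : Matrix (Fin n) (Fin n) ℂ) :
    Matrix (Fin n) (Fin n) ℂ →ₗ[ℂ] Matrix (Fin n) (Fin n) ℂ where
  toFun B := P ⊙ B
  map_add' B C := Matrix.hadamard_add P B C
  map_smul' c B := (Matrix.hadamard_smul P B c).symm ▸ rfl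

/-- The map `δ(X) = (Tr X / p) • I`. -/
def deltaMap (p : ℕ) : Matrix (Fin p) (Fin p) ℂ →ₗ[ℂ] Matrix (Fin p) (Fin p) ℂ where
  toFun X := (Matrix.trace X / p) • 1
  map_add' X Y := by simp [Matrix.trace_add, add_div, add_smul]
  map_smul' c X := by simp [mul_div_assoc, smul_smul]

/-- The one-parameter family `γ_t = t δ + S_A`. -/
def gammaMap {p : ℕ} (t : ℝ) (A : Matrix (Fin p) (Fin p) ℂ) :
    Matrix (Fin p) (Fin p) ℂ →ₗ[ℂ] Matrix (Fin p) (Fin p) ℂ :=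
  (t : ℂ) • deltaMap p + schurMap A

end
/-- `A` is the adjacency matrix of a graph: a symmetric 0-1 matrix with zero diagonal. -/
def IsAdjacencyMatrix {p : ℕ} (A : Matrix (Fin p) (Fin p) ℂ) : Prop :=
  Aᵀ = A ∧ (∀ i j, A i j = 0 ∨ A i j = 1) ∧ ∀ i, A i i = 0

/-! The Choi matrix `d • 1 + ∑ A i j • E_ij ⊗ E_ij` splits as a nonnegative diagonal matrix plus
`∑ (A i j / 2) • T_ij` with `T_ij = (E_ii + E_jj) ⊗ (E_ii + E_jj) + E_ij ⊗ E_ij + E_ji ⊗ E_ji`.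
Each `T_ij` is separable: it is the average over the phases `ω ∈ {1, i, -1, -i}` of the product
states `|ω e_i + e_j⟩⟨ω e_i + e_j| ⊗ |ω̄ e_i + e_j⟩⟨ω̄ e_i + e_j|`, whose cross terms carry `ω`, `ω̄`
or `ω²` and so average out. The diagonal remainder has entries `d - deg i` and `d - A i k`, which
are nonnegative because `d` is the maximum degree. -/

open Complex Finset

theorem sum_half_smul_add_swap {K ι M : Type*} [DivisionSemiring K] [NeZero (2 : K)] [Fintype ι]
    [AddCommMonoid M] [Module K M] {A : Matrix ι ι K} (hA : Aᵀ = A) (F : ι → ι → M) :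
    ∑ i, ∑ j, (A i j / 2) • (F i j + F j i) = ∑ i, ∑ j, A i j • F i j := by
  have hswap : ∑ i, ∑ j, (A i j / 2) • F j i = ∑ i, ∑ j, (A i j / 2) • F i j := by
    rw [sum_comm]
    refine sum_congr rfl fun i _ => sum_congr rfl fun j _ => ?_
    rw [← congr_fun (congr_fun hA i) j, transpose_apply]
  simp only [smul_add, sum_add_distrib, hswap]
  simp only [← sum_add_distrib, ← add_smul, add_halves]

theorem sum_eq_card_filter_eq_one {ι R : Type*} [Fintype ι] [AddCommMonoidWithOne R]
    [DecidableEq R] {f : ι → R} (hf : ∀ j, f j = 0 ∨ f j = 1) : ∑ j, f j = #{j | f j = 1} := by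
  rw [natCast_card_filter]
  refine sum_congr rfl fun j _ => ?_
  rcases hf j with h | h <;> simp [h]

namespace Separable

variable {p q : ℕ}

theorem zero : Separable (0 : Matrix (Fin p × Fin q) (Fin p × Fin q) ℂ) :=
  ⟨0, finZeroElim, finZeroElim, finZeroElim, finZeroElim, by simp⟩

theorem add {M N : Matrix (Fin p × Fin q) (Fin p × Fin q) ℂ}
    (hM : Separable M) (hN : Separable N) : Separable (M + N) := by
  obtain ⟨m, P, Q, hP, hQ, rfl⟩ := hM
  obtain ⟨n, R, S, hR, hS, rfl⟩ := hN
  refine ⟨m + n, Fin.append P R, Fin.append Q S,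
    Fin.addCases (by simpa using hP) (by simpa using hR),
    Fin.addCases (by simpa using hQ) (by simpa using hS), ?_⟩
  simp [Fin.sum_univ_add]

theorem sum {ι : Type*} {s : Finset ι} {M : ι → Matrix (Fin p × Fin q) (Fin p × Fin q) ℂ}
    (h : ∀ i ∈ s, Separable (M i)) : Separable (∑ i ∈ s, M i) :=
  Finset.sum_induction M Separable (fun _ _ => add) zero h

theorem smul {M : Matrix (Fin p × Fin q) (Fin p × Fin q) ℂ} (hM : Separable M)
    {c : ℂ} (hc : 0 ≤ c) : Separable (c • M) := by
  obtain ⟨m, P, Q, hP, hQ, rfl⟩ := hM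
  exact ⟨m, fun k => c • P k, Q, fun k => (hP k).smul hc, hQ, by simp [smul_sum, smul_kronecker]⟩

theorem kronecker {P : Matrix (Fin p) (Fin p) ℂ} {Q : Matrix (Fin q) (Fin q) ℂ}
    (hP : P.PosSemidef) (hQ : Q.PosSemidef) : Separable (P ⊗ₖ Q) :=
  ⟨1, fun _ => P, fun _ => Q, fun _ => hP, fun _ => hQ, by simp⟩

theorem diagonal {f : Fin p × Fin q → ℂ} (hf : ∀ x, 0 ≤ f x) : Separable (diagonal f) := by
  rw [← sum_single_eq_diagonal]
  refine sum fun x _ => ?_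
  rw [← mul_one (f x), ← single_kronecker_single, ← diagonal_single, ← diagonal_single]
  exact kronecker (.diagonal (Pi.single_nonneg.2 (hf x)))
    (.diagonal (Pi.single_nonneg.2 zero_le_one))

end Separable

theorem sum_phase_vecMulVec_kronecker {m n : Type*} [Fintype m] [Fintype n]
    (x y : m → ℂ) (u w : n → ℂ) :
    ∑ k : Fin 4, vecMulVec (![1, I, -1, -I] k • x + y) (star (![1, I, -1, -I] k • x + y)) ⊗ₖ
      vecMulVec (star (![1, I, -1, -I] k) • u + w) (star (star (![1, I, -1, -I] k) • u + w)) =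
    (4 : ℂ) • ((vecMulVec x (star x) + vecMulVec y (star y)) ⊗ₖ
        (vecMulVec u (star u) + vecMulVec w (star w)) +
      vecMulVec x (star y) ⊗ₖ vecMulVec u (star w) +
      vecMulVec y (star x) ⊗ₖ vecMulVec w (star u)) := by
  ext ⟨a, b⟩ ⟨c, e⟩
  simp only [Fin.sum_univ_four, Matrix.smul_apply, Matrix.add_apply, kroneckerMap_apply,
    vecMulVec_apply, Pi.add_apply, Pi.smul_apply, Pi.star_apply, star_add, star_smul, smul_eq_mul,
    cons_val_zero, cons_val_one, Matrix.cons_val, Complex.star_def, map_one, map_neg, conj_I,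
    conj_conj, neg_neg]
  ring_nf
  simp only [I_sq, I_pow_four]
  ring

theorem separable_twirl {p q : ℕ} (x y : Fin p → ℂ) (u w : Fin q → ℂ) :
    Separable ((vecMulVec x (star x) + vecMulVec y (star y)) ⊗ₖ
        (vecMulVec u (star u) + vecMulVec w (star w)) +
      vecMulVec x (star y) ⊗ₖ vecMulVec u (star w) +
      vecMulVec y (star x) ⊗ₖ vecMulVec w (star u)) := by
  rw [← inv_smul_smul₀ (four_ne_zero (α := ℂ)) (_ + _), ← sum_phase_vecMulVec_kronecker,
    smul_sum]
  refine Separable.sum fun k _ => ?_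
  rw [← smul_kronecker]
  exact Separable.kronecker ((posSemidef_vecMulVec_self_star _).smul (by positivity))
    (posSemidef_vecMulVec_self_star _)

section

variable {n : ℕ}

def edgeMatrix (i j : Fin n) : Matrix (Fin n × Fin n) (Fin n × Fin n) ℂ :=
  (single i i 1 + single j j 1) ⊗ₖ (single i i 1 + single j j 1) +
    single i j 1 ⊗ₖ single i j 1 + single j i 1 ⊗ₖ single j i 1

theorem separable_edgeMatrix (i j : Fin n) : Separable (edgeMatrix i j) := by
  simpa only [edgeMatrix, Pi.star_single, star_one, ← single_eq_single_vecMulVec_single] using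
    separable_twirl (Pi.single i 1) (Pi.single j 1) (Pi.single i 1) (Pi.single j 1)

theorem edgeMatrix_eq (i j : Fin n) :
    edgeMatrix i j =
      (single i i 1 ⊗ₖ single i i 1 + single i i 1 ⊗ₖ single j j 1 +
          single i j 1 ⊗ₖ single i j 1) +
        (single j j 1 ⊗ₖ single j j 1 + single j j 1 ⊗ₖ single i i 1 +
          single j i 1 ⊗ₖ single j i 1) := by
  simp only [edgeMatrix, add_kronecker, kronecker_add]
  abel

theorem sum_smul_edgeMatrix {A : Matrix (Fin n) (Fin n) ℂ} (hA : Aᵀ = A) :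
    ∑ i, ∑ j, (A i j / 2) • edgeMatrix i j =
      ∑ i, ∑ j, A i j • (single i i 1 ⊗ₖ single i i 1 + single i i 1 ⊗ₖ single j j 1) +
        ∑ i, ∑ j, A i j • (single i j (1 : ℂ) ⊗ₖ single i j (1 : ℂ)) := by
  simp only [edgeMatrix_eq]
  rw [sum_half_smul_add_swap hA]
  simp only [smul_add, sum_add_distrib]

theorem sum_smul_single_kronecker_single_eq_diagonal (A : Matrix (Fin n) (Fin n) ℂ) :
    ∑ i, ∑ j, A i j • (single i i (1 : ℂ) ⊗ₖ single i i 1 + single i i 1 ⊗ₖ single j j 1) =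
      diagonal fun x => (if x.1 = x.2 then ∑ j, A x.1 j else 0) + A x.1 x.2 := by
  ext ⟨a, b⟩ ⟨c, e⟩
  simp +contextual only [single_kronecker_single, mul_one, smul_add, smul_single, smul_eq_mul,
    sum_add_distrib, Matrix.sum_apply, Matrix.add_apply, single_apply, Prod.mk.injEq, ite_and,
    sum_ite_irrel, sum_const_zero, sum_ite_eq', mem_univ, if_true, diagonal_apply]
  split_ifs <;> simp_all

theorem smul_one_add_sum_eq_diagonal_add {A : Matrix (Fin n) (Fin n) ℂ} (hA : Aᵀ = A) (d : ℂ) :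
    d • 1 + ∑ i, ∑ j, A i j • (single i j (1 : ℂ) ⊗ₖ single i j (1 : ℂ)) =
      diagonal (fun x => d - ((if x.1 = x.2 then ∑ j, A x.1 j else 0) + A x.1 x.2)) +
        ∑ i, ∑ j, (A i j / 2) • edgeMatrix i j := by
  rw [sum_smul_edgeMatrix hA, sum_smul_single_kronecker_single_eq_diagonal, ← add_assoc,
    diagonal_add]
  simp only [sub_add_cancel, smul_one_eq_diagonal]

theorem IsAdjacencyMatrix.separable_smul_one_add_sum {A : Matrix (Fin n) (Fin n) ℂ}
    (hA : IsAdjacencyMatrix A) {d : ℕ} (hdeg : ∀ i, #{j | A i j = 1} ≤ d) :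
    Separable ((d : ℂ) • 1 + ∑ i, ∑ j, A i j • (single i j (1 : ℂ) ⊗ₖ single i j (1 : ℂ))) := by
  obtain ⟨hsymm, h01, hdiag⟩ := hA
  rw [smul_one_add_sum_eq_diagonal_add hsymm]
  refine .add (.diagonal fun ⟨a, b⟩ => ?_) (.sum fun i _ => .sum fun j _ => ?_)
  · rcases eq_or_ne a b with rfl | hab
    · simp only [if_pos, hdiag, add_zero, sum_eq_card_filter_eq_one (h01 a), sub_nonneg]
      exact_mod_cast hdeg a
    · rcases h01 a b with h | h
      · simp [hab, h]
      · have hdeg_pos : 1 ≤ #{j | A a j = 1} := card_pos.2 ⟨b, by simp [h]⟩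
        simp only [if_neg hab, zero_add, h, sub_nonneg]
        exact_mod_cast hdeg_pos.trans (hdeg a)
  · refine (separable_edgeMatrix i j).smul ?_
    rcases h01 i j with h | h <;> simp [h]

theorem choi_add {p q : ℕ} (φ ψ : Matrix (Fin p) (Fin p) ℂ →ₗ[ℂ] Matrix (Fin q) (Fin q) ℂ) :
    choi (φ + ψ) = choi φ + choi ψ := rfl

theorem choi_smul {p q : ℕ} (c : ℂ)
    (φ : Matrix (Fin p) (Fin p) ℂ →ₗ[ℂ] Matrix (Fin q) (Fin q) ℂ) :
    choi (c • φ) = c • choi φ := rfl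

theorem choi_deltaMap : choi (deltaMap n) = (n : ℂ)⁻¹ • 1 := by
  ext ⟨i, k⟩ ⟨j, l⟩
  rcases eq_or_ne i j with rfl | hij
  · simp [choi, deltaMap, trace_single_eq_same, one_apply]
  · simp [choi, deltaMap, trace_single_eq_of_ne _ _ _ hij, one_apply, hij]

theorem choi_schurMap (A : Matrix (Fin n) (Fin n) ℂ) :
    choi (schurMap A) = ∑ i, ∑ j, A i j • (single i j (1 : ℂ) ⊗ₖ single i j (1 : ℂ)) := by
  ext ⟨i, k⟩ ⟨j, l⟩
  simp +contextual [choi, schurMap, single_kronecker_single, Matrix.sum_apply, single_apply,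
    ite_and]

theorem choi_gammaMap_natCast_mul (A : Matrix (Fin n) (Fin n) ℂ) (t : ℝ) :
    choi (gammaMap (n * t) A) =
      (t : ℂ) • 1 + ∑ i, ∑ j, A i j • (single i j (1 : ℂ) ⊗ₖ single i j (1 : ℂ)) := by
  rw [gammaMap, choi_add, choi_smul, choi_deltaMap, choi_schurMap, smul_smul]
  rcases eq_or_ne n 0 with rfl | hn
  · exact Subsingleton.elim _ _
  · push_cast
    rw [mul_comm, inv_mul_cancel_left₀ (Nat.cast_ne_zero.2 hn)]

end

/-- for a graph with adjacency matrix `A` on `p` vertices and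
maximum degree `d`, the Choi matrix `d·(I ⊗ I) + Σ_{(i,j)∈E} E_{ij} ⊗ E_{ij}`
of `γ_{pd}` is separable; hence `γ_{pd}` is entanglement breaking and `t_eb ≤ pd`. -/
theorem gamma_pd_eb {p : ℕ} (A : Matrix (Fin p) (Fin p) ℂ)
    (hadj : IsAdjacencyMatrix A) (d : ℕ)
    (hd : d = Finset.univ.sup fun i : Fin p =>
      (Finset.univ.filter fun j : Fin p => A i j = 1).card) :
    Separable ((d : ℂ) • (1 : Matrix (Fin p × Fin p) (Fin p × Fin p) ℂ) +
      ∑ i : Fin p, ∑ j : Fin p,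
        A i j • (Matrix.single i j (1 : ℂ) ⊗ₖ Matrix.single i j (1 : ℂ))) ∧
    IsEB (gammaMap ((p : ℝ) * d) A) ∧
    sInf {t : ℝ | IsEB (gammaMap t A)} ≤ (p : ℝ) * d := by
  have hsep := hadj.separable_smul_one_add_sum fun i => hd ▸ le_sup (mem_univ i)
  have heb : IsEB (gammaMap ((p : ℝ) * d) A) := by
    rw [IsEB, choi_gammaMap_natCast_mul]
    exact_mod_cast hsep
  refine ⟨hsep, heb, ?_⟩
  by_cases hbdd : BddBelow {t : ℝ | IsEB (gammaMap t A)}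
  · exact csInf_le hbdd heb
  · rw [Real.sInf_of_not_bddBelow hbdd]
    positivity
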